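/- arXiv:1309.2552 — 2 statements merged into one kernel-verified Lean document; each statement's English description precedes it below -/
import Mathlib

section
/- Let $A=\begin{pmatrix}0&b\\c&0\end{pmatrix}$ and endow $\mathbb{R}^3$ with the Riemannian metric $g_{(x,y,z)}=(a_{21}(z)^2+a_{11}(z)^2)dx^2+(a_{11}(z)^2+a_{12}(z)^2)dy^2+dz^2-(a_{11}(z)a_{21}(z)+a_{12}(z)a_{11}(z))(dx\otimes dy+dy\otimes dx)$, where $a_{ij}(z)$ are the entries of $e^{zA}$. Then for any $x_0\in\mathbb{R}$, the map $\phi(x,y,z)=(-x+2x_0,\,y,\,-z)$ (rotation by angle $\pi$ about the line $\{(x_0,t,0):t\in\mathbb{R}\}$) is an isometry of this metric. -/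
open NormedSpace

/-- Entries of the matrix exponential `e^{zA}`. -/
noncomputable def aEntry (A : Matrix (Fin 2) (Fin 2) ℝ) (i j : Fin 2) (z : ℝ) : ℝ :=
  exp (z • A) i j

/-- The canonical left invariant metric of `ℝ² ⋊_A ℝ`, `A = !![0,b;c,0]`, in coordinates:
`g = (a₂₁² + a₁₁²)dx² + (a₁₁² + a₁₂²)dy² + dz² - (a₁₁a₂₁ + a₁₂a₁₁)(dx⊗dy + dy⊗dx)`. -/
noncomputable def sdMetric (A : Matrix (Fin 2) (Fin 2) ℝ)
    (p : ℝ × ℝ × ℝ) (v w : ℝ × ℝ × ℝ) : ℝ :=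
  let z := p.2.2
  let a₁₁ := aEntry A 0 0 z; let a₁₂ := aEntry A 0 1 z; let a₂₁ := aEntry A 1 0 z
  (a₂₁ ^ 2 + a₁₁ ^ 2) * (v.1 * w.1) + (a₁₁ ^ 2 + a₁₂ ^ 2) * (v.2.1 * w.2.1)
    + v.2.2 * w.2.2
    - (a₁₁ * a₂₁ + a₁₂ * a₁₁) * (v.1 * w.2.1 + v.2.1 * w.1)

/-! With `J = diag(1, -1)` one has `J A J = -A`, hence `e^{-zA} = J e^{zA} J`: the entry `a₁₁` is
even in `z` while `a₁₂` and `a₂₁` are odd. The rotation sends `z ↦ -z` and its differential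
flips the signs of `v₁` and `v₃`, so every coefficient of the metric changes sign exactly when
the monomial it multiplies does. -/

namespace Matrix

variable {m 𝔸 : Type*} [Fintype m] [DecidableEq m] [NormedRing 𝔸] [NormedAlgebra ℚ 𝔸]
  [CompleteSpace 𝔸]

theorem exp_neg_of_involution_conj_eq_neg {J A : Matrix m m 𝔸} (hJ : J * J = 1)
    (hA : J * A * J = -A) : exp (-A) = J * exp A * J := by
  rw [← hA]
  exact Matrix.exp_units_conj ⟨J, J, hJ, hJ⟩ A

end Matrix

section AntiDiagonal

variable (b c z : ℝ)

lemma diag_one_neg_one_mul_self : !![(1 : ℝ), 0; 0, -1] * !![1, 0; 0, -1] = 1 := by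
  simp [Matrix.one_fin_two]

lemma diag_one_neg_one_conj_antidiag :
    !![1, 0; 0, -1] * (z • !![0, b; c, 0]) * !![1, 0; 0, -1] = -(z • !![0, b; c, 0]) := by
  simp

lemma diag_one_neg_one_conj (M : Matrix (Fin 2) (Fin 2) ℝ) :
    !![1, 0; 0, -1] * M * !![1, 0; 0, -1] = !![M 0 0, -M 0 1; -M 1 0, M 1 1] := by
  rw [M.eta_fin_two]
  simp

lemma exp_neg_smul_antidiag :
    exp ((-z) • !![0, b; c, 0]) =
      !![1, 0; 0, -1] * exp (z • !![0, b; c, 0]) * !![1, 0; 0, -1] := by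
  rw [neg_smul, Matrix.exp_neg_of_involution_conj_eq_neg diag_one_neg_one_mul_self
    (diag_one_neg_one_conj_antidiag b c z)]

lemma aEntry_antidiag_zero_zero_neg :
    aEntry !![0, b; c, 0] 0 0 (-z) = aEntry !![0, b; c, 0] 0 0 z := by
  rw [aEntry, exp_neg_smul_antidiag, diag_one_neg_one_conj]
  rfl

lemma aEntry_antidiag_zero_one_neg :
    aEntry !![0, b; c, 0] 0 1 (-z) = -aEntry !![0, b; c, 0] 0 1 z := by
  rw [aEntry, exp_neg_smul_antidiag, diag_one_neg_one_conj]
  rfl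

lemma aEntry_antidiag_one_zero_neg :
    aEntry !![0, b; c, 0] 1 0 (-z) = -aEntry !![0, b; c, 0] 1 0 z := by
  rw [aEntry, exp_neg_smul_antidiag, diag_one_neg_one_conj]
  rfl

end AntiDiagonal

/-- Rotation by angle `π` about the horizontal geodesic `{(x₀,t,0)}` parallel to the
`y`-axis, `φ(x,y,z) = (-x + 2x₀, y, -z)`, is an isometry of the canonical metric of
`ℝ² ⋊_A ℝ` for `A = !![0,b;c,0]`: its (linear) differential `dφ(v) = (-v₁, v₂, -v₃)`
preserves the metric. -/
theorem rotation_about_y_axis_geodesic_isometry (b c : ℝ) (x₀ : ℝ)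
    (φ : ℝ × ℝ × ℝ → ℝ × ℝ × ℝ) (dφ : ℝ × ℝ × ℝ → ℝ × ℝ × ℝ)
    (hφ : ∀ p : ℝ × ℝ × ℝ, φ p = (-p.1 + 2 * x₀, p.2.1, -p.2.2))
    (hdφ : ∀ v : ℝ × ℝ × ℝ, dφ v = (-v.1, v.2.1, -v.2.2)) :
    ∀ (p v w : ℝ × ℝ × ℝ),
      sdMetric !![0, b; c, 0] (φ p) (dφ v) (dφ w) = sdMetric !![0, b; c, 0] p v w := by
  intro p v w
  simp only [sdMetric, hφ, hdφ, aEntry_antidiag_zero_zero_neg, aEntry_antidiag_zero_one_neg,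
    aEntry_antidiag_one_zero_neg]
  ring
end

section
/- Let $A=\begin{pmatrix}0&b\\c&0\end{pmatrix}$ and endow $\mathbb{R}^3$ with the canonical left invariant metric of $\mathbb{R}^2\rtimes_A\mathbb{R}$ in coordinates, namely $g_{(x,y,z)}=(a_{21}(z)^2+a_{11}(z)^2)dx^2+(a_{11}(z)^2+a_{12}(z)^2)dy^2+dz^2-(a_{11}(z)a_{21}(z)+a_{12}(z)a_{11}(z))(dx\otimes dy+dy\otimes dx)$. Then for any $y_0\in\mathbb{R}$, the map $\psi(x,y,z)=(x,\,-y+2y_0,\,-z)$ is an isometry of this metric. -/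
open NormedSpace

/-! Conjugation by `D = diag(1, -1)` negates `A = !![0, b; c, 0]`, so `e^{-zA} = D e^{zA} D`:
`a₁₁` is even in `z` while `a₁₂` and `a₂₁` are odd. Every term of the metric is therefore
invariant under `(v₂, w₂, v₃, w₃, z) ↦ (-v₂, -w₂, -v₃, -w₃, -z)`, and `x`, `y` do not enter it. -/

theorem Matrix.exp_neg_of_conj_involution {m 𝔸 : Type*} [Fintype m] [DecidableEq m]
    [NormedRing 𝔸] [NormedAlgebra ℚ 𝔸] [CompleteSpace 𝔸] {U A : Matrix m m 𝔸}
    (hU : U * U = 1) (hA : U * A * U = -A) : exp (-A) = U * exp A * U := by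
  rw [← hA]
  exact Matrix.exp_units_conj ⟨U, U, hU, hU⟩ A

theorem aEntry_offDiag_neg (b c z : ℝ) (i j : Fin 2) :
    aEntry !![0, b; c, 0] i j (-z) = ![1, -1] i * ![1, -1] j * aEntry !![0, b; c, 0] i j z := by
  have hU : Matrix.diagonal ![(1 : ℝ), -1] * Matrix.diagonal ![1, -1] = 1 := by
    rw [Matrix.diagonal_mul_diagonal, ← Matrix.diagonal_one]
    congr 1; ext k; fin_cases k <;> norm_num
  have hA : Matrix.diagonal ![(1 : ℝ), -1] * (z • !![0, b; c, 0]) * Matrix.diagonal ![1, -1]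
      = -(z • !![0, b; c, 0]) := by
    ext k l; fin_cases k <;> fin_cases l <;> simp
  rw [aEntry, neg_smul, Matrix.exp_neg_of_conj_involution hU hA, Matrix.mul_diagonal,
    Matrix.diagonal_mul, aEntry]
  ring

/-- Rotation by angle `π` about the horizontal geodesic parallel to the `x`-axis,
`ψ(x,y,z) = (x, -y + 2y₀, -z)`, is an isometry of the canonical metric of
`ℝ² ⋊_A ℝ` for `A = !![0,b;c,0]`: its (linear) differential `dψ(v) = (v₁, -v₂, -v₃)`
preserves the metric. -/
theorem rotation_about_x_axis_geodesic_isometry (b c : ℝ) (y₀ : ℝ)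
    (ψ : ℝ × ℝ × ℝ → ℝ × ℝ × ℝ) (dψ : ℝ × ℝ × ℝ → ℝ × ℝ × ℝ)
    (hψ : ∀ p : ℝ × ℝ × ℝ, ψ p = (p.1, -p.2.1 + 2 * y₀, -p.2.2))
    (hdψ : ∀ v : ℝ × ℝ × ℝ, dψ v = (v.1, -v.2.1, -v.2.2)) :
    ∀ (p v w : ℝ × ℝ × ℝ),
      sdMetric !![0, b; c, 0] (ψ p) (dψ v) (dψ w) = sdMetric !![0, b; c, 0] p v w := by
  intro p v w
  simp only [sdMetric, hψ, hdψ, aEntry_offDiag_neg,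
    Matrix.cons_val_zero, Matrix.cons_val_one]
  ring
end
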